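/- Let F3 = ⟨α1, α2, α3⟩ be the free group on three generators and Π = α1α2α3. The quotient of F3 by the relations α1 = α3, α2 = Πα1Π⁻¹, α3 = Πα2Π⁻¹ is isomorphic to the braid group B3 = ⟨a, b | aba = bab⟩. -/
import Mathlib


/-- The generators `α₁, α₂, α₃` of the free group `F₃`. -/
def α (i : Fin 3) : FreeGroup (Fin 3) := FreeGroup.of i

/-- `Π = α₁α₂α₃`. -/
def Pi3 : FreeGroup (Fin 3) := α 0 * α 1 * α 2

/-- The monodromy relations of a singular fiber of type `Ã₂*`:
`α₁ = α₃`, `α₂ = Πα₁Π⁻¹`, `α₃ = Πα₂Π⁻¹`. -/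
def rels : Set (FreeGroup (Fin 3)) :=
  {(α 0)⁻¹ * α 2, (α 1)⁻¹ * (Pi3 * α 0 * Pi3⁻¹), (α 2)⁻¹ * (Pi3 * α 1 * Pi3⁻¹)}

/-- The braid relation `aba = bab` on two generators. -/
def braidRels : Set (FreeGroup (Fin 2)) :=
  {FreeGroup.of 0 * FreeGroup.of 1 * FreeGroup.of 0 *
    (FreeGroup.of 1 * FreeGroup.of 0 * FreeGroup.of 1)⁻¹}

/-- The braid group `B₃ = ⟨a, b ∣ aba = bab⟩`. -/
def B3 : Type := PresentedGroup braidRels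

noncomputable instance : Group B3 := by unfold B3; infer_instance

lemma rel_one {β : Type*} {R : Set (FreeGroup β)} {r : FreeGroup β} (hr : r ∈ R) :
    PresentedGroup.mk R r = 1 :=
  (QuotientGroup.eq_one_iff r).mpr (Subgroup.subset_normalClosure hr)

lemma braid_rel :
    (PresentedGroup.of 0 : PresentedGroup braidRels) * .of 1 * .of 0 =
      PresentedGroup.of 1 * .of 0 * .of 1 := by
  have h := rel_one (R := braidRels) rfl
  simp only [map_mul, map_inv] at h
  have h2 := mul_eq_one_iff_eq_inv.mp h
  rwa [inv_inv] at h2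

/-- The forward homomorphism. -/
noncomputable def fwd : PresentedGroup rels →* PresentedGroup braidRels := by
  refine PresentedGroup.toGroup (f := fun i => PresentedGroup.of (![0, 1, 0] i)) ?_
  intro r hr
  set a : PresentedGroup braidRels := PresentedGroup.of 0 with ha
  set b : PresentedGroup braidRels := PresentedGroup.of 1 with hb
  have h : a * b * a = b * a * b := braid_rel
  rcases hr with h1 | h1 | h1 <;> subst h1 <;>
    simp only [α, Pi3, map_mul, map_inv, FreeGroup.lift_apply_of, Matrix.cons_val_zero,
      Matrix.cons_val_one, Matrix.head_cons, Matrix.cons_val_two, Matrix.tail_cons, ← ha, ← hb]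
  · group
  · rw [inv_mul_eq_one, eq_comm, mul_inv_eq_iff_eq_mul]
    conv_lhs => rw [h]
    group
  · rw [inv_mul_eq_one, eq_comm, mul_inv_eq_iff_eq_mul]
    calc a * b * a * b = a * (b * a * b) := by group
      _ = a * (a * b * a) := by rw [h]

/-- The backward homomorphism. -/
noncomputable def bwd : PresentedGroup braidRels →* PresentedGroup rels := by
  refine PresentedGroup.toGroup (f := fun j => PresentedGroup.of (![0, 1] j)) ?_
  intro r hr
  simp only [braidRels, Set.mem_singleton_iff] at hr
  subst hr
  have r1 : (PresentedGroup.mk rels ((α 0)⁻¹ * α 2)) = 1 := rel_one (by left; rfl)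
  have r2 : (PresentedGroup.mk rels ((α 1)⁻¹ * (Pi3 * α 0 * Pi3⁻¹))) = 1 :=
    rel_one (by right; left; rfl)
  simp only [α, Pi3, map_mul, map_inv] at r1 r2
  rw [inv_mul_eq_one] at r1 r2
  have r1' : (PresentedGroup.of 0 : PresentedGroup rels) = PresentedGroup.of 2 := r1
  have r2' : (PresentedGroup.of 1 : PresentedGroup rels) =
      PresentedGroup.of 0 * PresentedGroup.of 1 * PresentedGroup.of 2 * PresentedGroup.of 0 *
        (PresentedGroup.of 0 * PresentedGroup.of 1 * PresentedGroup.of 2)⁻¹ := r2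
  set x : PresentedGroup rels := PresentedGroup.of 0 with hx
  set y : PresentedGroup rels := PresentedGroup.of 1 with hy
  rw [← r1'] at r2'
  -- r2' : y = x*y*x * x * (x*y*x)⁻¹
  have key : x * y * x = y * x * y := by
    have h3 : y * (x * y * x) = x * y * x * x := by
      calc y * (x * y * x) = x * y * x * x * (x * y * x)⁻¹ * (x * y * x) := by rw [← r2']
        _ = x * y * x * x := by group
    have h4 : x * y * x * x = y * x * y * x := by rw [← h3]; group
    exact mul_right_cancel h4
  simp only [map_mul, map_inv, FreeGroup.lift_apply_of, Matrix.cons_val_zero, Matrix.cons_val_one,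
    Matrix.head_cons, ← hx, ← hy]
  rw [mul_inv_eq_one]
  exact key

lemma of02 : (PresentedGroup.of 0 : PresentedGroup rels) = PresentedGroup.of 2 := by
  have r1 : (PresentedGroup.mk rels ((α 0)⁻¹ * α 2)) = 1 := rel_one (by left; rfl)
  simp only [α, map_mul, map_inv] at r1
  rw [inv_mul_eq_one] at r1
  exact r1

lemma fwd_of (i : Fin 3) : fwd (PresentedGroup.of i) = PresentedGroup.of (![0, 1, 0] i) :=
  PresentedGroup.toGroup.of _

lemma bwd_of (j : Fin 2) : bwd (PresentedGroup.of j) = PresentedGroup.of (![0, 1] j) :=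
  PresentedGroup.toGroup.of _

/-- The quotient of `F₃` by the monodromy relations of an `Ã₂*` fiber is
isomorphic to the braid group `B₃`. -/
theorem stmt_11 :
    Nonempty ((FreeGroup (Fin 3) ⧸ Subgroup.normalClosure rels) ≃* B3) := by
  refine ⟨MonoidHom.toMulEquiv fwd bwd (PresentedGroup.ext fun i => ?_)
    (PresentedGroup.ext fun j => ?_)⟩
  · show bwd (fwd (PresentedGroup.of i)) = PresentedGroup.of i
    rw [fwd_of, bwd_of]
    fin_cases i
    · rfl
    · rfl
    · exact of02
  · show fwd (bwd (PresentedGroup.of j)) = PresentedGroup.of j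
    rw [bwd_of, fwd_of]
    fin_cases j
    · rfl
    · rfl
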